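/- Let (X_1,…,X_n) be a Markov tree process over a finite set S defined by a tree T = (V,E) with breadth-first ordering and transition kernels p_0, (p_{uv})_{(u,v)∈E}. Define θ_{uv} = max_{y,y'} ‖p_{uv}(·|y) − p_{uv}(·|y')‖_TV. Fix 1 ≤ i < j ≤ n such that T_i^j = T_i ∩ {j,…,n} ≠ ∅, and let j_0 = min T_i^j. Then η̄_{ij} ≤ ∏_{d = dep(i)+1}^{dep(j_0)} α({θ_{uv} : v ∈ lev_T(d), (u,v) ∈ E}), where α is the recursively defined symmetric function and η̄_{ij} = sup_{y,w,w'} η_{ij}(y,w,w'). -/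

import Mathlib

/-!
Conditionally on `X_{≤ i}`, the descendants of `i` are generated level by level. Replacing every
coordinate outside the current level by a dummy state `s0` turns this into a Markov chain whose
step to depth `d` is a product kernel; comparing two product measures through `∑ min` shows that
its Dobrushin coefficient is at most `α(θ_v : dep v = d) = 1 - ∏ (1 - θ_v)`. Until the block
`X_{≥ j}` is reached, that is up to depth `dep j₀`, the law of the block is a mixture over the
current level of conditional laws that no longer see `X_i`. Hence `η_{ij}` is at most the total
variation between the two laws of level `dep j₀`, and Dobrushin's inequality, applied once per
level, bounds that by the product of the `α`'s.
-/

def alpha : (k : ℕ) → (Fin k → ℝ) → ℝ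
  | 0, _ => 0
  | k + 1, x => x (Fin.last k) + (1 - x (Fin.last k)) * alpha k (x ∘ Fin.castSucc)

/-- The binary operation underlying `α`. -/
def opA (a b : ℝ) : ℝ := a + b - a * b

instance : Std.Commutative opA := ⟨fun a b => by unfold opA; ring⟩
instance : Std.Associative opA := ⟨fun a b c => by unfold opA; ring⟩

/-- `α` applied to the multiset of values `f v`, `v ∈ s` (well defined by symmetry of `α_k`). -/
def alphaOn {ι : Type*} (s : Finset ι) (f : ι → ℝ) : ℝ := s.fold opA 0 f

def desc {n : ℕ} (par : Fin n → Fin n) (i v : Fin n) : Prop :=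
  Relation.ReflTransGen (fun a b : Fin n => (b : ℕ) ≠ 0 ∧ par b = a) i v

open Classical in
noncomputable def Tij {n : ℕ} (par : Fin n → Fin n) (i j : Fin n) : Finset (Fin n) :=
  Finset.univ.filter fun v => desc par i v ∧ j ≤ v

open Classical in
noncomputable def condP {n : ℕ} {S : Type*} [Fintype S]
    (par : Fin n → Fin n) (p : Fin n → S → S → ℝ) (i j : Fin n)
    (y : Fin n → S) (s : {v : Fin n // j ≤ v} → S) : ℝ :=
  ∑ x ∈ Finset.univ.filter (fun x : Fin n → S =>
      (∀ v, v ≤ i → x v = y v) ∧ ∀ v : {v : Fin n // j ≤ v}, x v.1 = s v),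
    ∏ v ∈ Finset.univ.filter (fun v : Fin n => i < v), p v (x v) (x (par v))

noncomputable def eta {n : ℕ} {S : Type*} [Fintype S]
    (par : Fin n → Fin n) (p : Fin n → S → S → ℝ) (i j : Fin n)
    (y y' : Fin n → S) : ℝ :=
  (1 / 2) * ∑ s : {v : Fin n // j ≤ v} → S,
    |condP par p i j y s - condP par p i j y' s|

/-- The `(par v, v)`-contraction coefficient
`θ_{par v, v} = max_{b,b'} ‖p_v(·|b) − p_v(·|b')‖_TV`. -/
noncomputable def thetaCoef {n : ℕ} {S : Type*} [Fintype S] [Nonempty S]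
    (p : Fin n → S → S → ℝ) (v : Fin n) : ℝ :=
  Finset.univ.sup' Finset.univ_nonempty
    (fun bb' : S × S => (1 / 2) * ∑ a, |p v a bb'.1 - p v a bb'.2|)

open Finset

noncomputable def tvDist {α : Type*} [Fintype α] (μ ν : α → ℝ) : ℝ :=
  1 / 2 * ∑ a, |μ a - ν a|

section TotalVariation

variable {α β : Type*} [Fintype α] [Fintype β] {μ ν : α → ℝ}

lemma tvDist_nonneg (μ ν : α → ℝ) : 0 ≤ tvDist μ ν := by
  unfold tvDist
  positivity

@[simp]
lemma tvDist_self (μ : α → ℝ) : tvDist μ μ = 0 := by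
  simp [tvDist]

lemma eq_of_tvDist_eq_zero (h : tvDist μ ν = 0) : μ = ν := by
  have hsum : ∑ a, |μ a - ν a| = 0 := by simpa [tvDist] using h
  funext a
  exact sub_eq_zero.mp <| abs_eq_zero.mp <|
    (sum_eq_zero_iff_of_nonneg fun a _ => abs_nonneg _).mp hsum a (mem_univ a)

lemma tvDist_eq_one_sub_sum_min (hμ : ∑ a, μ a = 1) (hν : ∑ a, ν a = 1) :
    tvDist μ ν = 1 - ∑ a, min (μ a) (ν a) := by
  have h : ∀ a, |μ a - ν a| = μ a + ν a - 2 * min (μ a) (ν a) := fun a => by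
    rw [← max_sub_min_eq_abs', ← min_add_max (μ a) (ν a)]
    ring
  simp only [tvDist, h, sum_sub_distrib, sum_add_distrib, ← mul_sum, hμ, hν]
  ring

lemma tvDist_le_one (hμ0 : ∀ a, 0 ≤ μ a) (hν0 : ∀ a, 0 ≤ ν a)
    (hμ : ∑ a, μ a = 1) (hν : ∑ a, ν a = 1) : tvDist μ ν ≤ 1 := by
  rw [tvDist_eq_one_sub_sum_min hμ hν, sub_le_self_iff]
  exact sum_nonneg fun a _ => le_min (hμ0 a) (hν0 a)

lemma sum_negPart_sub_eq_sum_posPart_sub (hμν : ∑ a, μ a = ∑ a, ν a) :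
    ∑ a, (μ a - ν a)⁻ = ∑ a, (μ a - ν a)⁺ := by
  have : ∑ a, ((μ a - ν a)⁺ - (μ a - ν a)⁻) = 0 := by
    simp only [posPart_sub_negPart, sum_sub_distrib, hμν, sub_self]
  rw [sum_sub_distrib] at this
  linarith

lemma tvDist_eq_sum_posPart_sub (hμν : ∑ a, μ a = ∑ a, ν a) :
    tvDist μ ν = ∑ a, (μ a - ν a)⁺ := by
  simp only [tvDist, ← posPart_add_negPart, sum_add_distrib,
    sum_negPart_sub_eq_sum_posPart_sub hμν]
  ring

/-- The coupling of the positive and the negative part of `μ - ν`, which have the same mass. -/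
lemma sum_posPart_sub_mul_sub_eq (hμν : ∑ a, μ a = ∑ a, ν a) (c : α → ℝ) :
    (∑ a, (μ a - ν a)⁺) * (∑ a, μ a * c a - ∑ a, ν a * c a)
      = ∑ a, ∑ a', (μ a - ν a)⁺ * (μ a' - ν a')⁻ * (c a - c a') := by
  calc (∑ a, (μ a - ν a)⁺) * (∑ a, μ a * c a - ∑ a, ν a * c a)
      = (∑ a, (μ a - ν a)⁺ * c a) * (∑ a', (μ a' - ν a')⁻)
          - (∑ a, (μ a - ν a)⁺) * ∑ a', (μ a' - ν a')⁻ * c a' := by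
        have hsplit : ∑ a, μ a * c a - ∑ a, ν a * c a
            = ∑ a, (μ a - ν a)⁺ * c a - ∑ a, (μ a - ν a)⁻ * c a := by
          simp only [← sum_sub_distrib, ← sub_mul, posPart_sub_negPart]
        rw [hsplit, sum_negPart_sub_eq_sum_posPart_sub hμν]
        ring
    _ = _ := by
        simp only [sum_mul_sum, ← sum_sub_distrib]
        exact sum_congr rfl fun a _ => sum_congr rfl fun a' _ => by ring

/-- Dobrushin's contraction inequality. -/
lemma tvDist_comp_le (μ ν : α → ℝ) (K : α → β → ℝ) {θ : ℝ}
    (hμν : ∑ a, μ a = ∑ a, ν a) (hK : ∀ a a', tvDist (K a) (K a') ≤ θ) :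
    tvDist (fun b => ∑ a, μ a * K a b) (fun b => ∑ a, ν a * K a b) ≤ θ * tvDist μ ν := by
  rw [tvDist_eq_sum_posPart_sub hμν]
  set P := ∑ a, (μ a - ν a)⁺ with hP_def
  have hP0 : 0 ≤ P := sum_nonneg fun a _ => posPart_nonneg _
  obtain hP | hP := hP0.eq_or_lt
  · rw [eq_of_tvDist_eq_zero ((tvDist_eq_sum_posPart_sub hμν).trans hP.symm), ← hP]
    simp
  refine le_of_mul_le_mul_left ?_ hP
  calc P * tvDist (fun b => ∑ a, μ a * K a b) (fun b => ∑ a, ν a * K a b)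
      = 1 / 2 * ∑ b, |∑ a, ∑ a', (μ a - ν a)⁺ * (μ a' - ν a')⁻ * (K a b - K a' b)| := by
        simp only [tvDist, ← sum_posPart_sub_mul_sub_eq hμν, ← hP_def, abs_mul, abs_of_pos hP,
          mul_sum]
        ring_nf
    _ ≤ 1 / 2 * ∑ b, ∑ a, ∑ a', (μ a - ν a)⁺ * (μ a' - ν a')⁻ * |K a b - K a' b| := by
        gcongr with b
        refine (abs_sum_le_sum_abs _ _).trans (sum_le_sum fun a _ => ?_)
        refine (abs_sum_le_sum_abs _ _).trans (sum_le_sum fun a' _ => ?_)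
        rw [abs_mul, abs_of_nonneg (mul_nonneg (posPart_nonneg _) (negPart_nonneg _))]
    _ = ∑ a, ∑ a', (μ a - ν a)⁺ * (μ a' - ν a')⁻ * tvDist (K a) (K a') := by
        simp only [tvDist, mul_sum]
        rw [sum_comm]
        refine sum_congr rfl fun a _ => ?_
        rw [sum_comm]
        exact sum_congr rfl fun a' _ => sum_congr rfl fun b _ => by ring
    _ ≤ ∑ a, ∑ a', (μ a - ν a)⁺ * (μ a' - ν a')⁻ * θ := by
        gcongr with a _ a' _
        exact hK a a'
    _ = P * (θ * P) := by
        simp only [← sum_mul, ← mul_sum, sum_negPart_sub_eq_sum_posPart_sub hμν]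
        ring

lemma tvDist_comp_le_tvDist (μ ν : α → ℝ) {K : α → β → ℝ} (hμν : ∑ a, μ a = ∑ a, ν a)
    (hK0 : ∀ a b, 0 ≤ K a b) (hK1 : ∀ a, ∑ b, K a b = 1) :
    tvDist (fun b => ∑ a, μ a * K a b) (fun b => ∑ a, ν a * K a b) ≤ tvDist μ ν := by
  simpa using tvDist_comp_le μ ν K hμν fun a a' => tvDist_le_one (hK0 a) (hK0 a') (hK1 a) (hK1 a')

lemma tvDist_pi_le {ι : Type*} [Fintype ι] [DecidableEq ι] {f g : ι → α → ℝ}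
    (hf0 : ∀ v a, 0 ≤ f v a) (hg0 : ∀ v a, 0 ≤ g v a)
    (hf1 : ∀ v, ∑ a, f v a = 1) (hg1 : ∀ v, ∑ a, g v a = 1) :
    tvDist (fun z : ι → α => ∏ v, f v (z v)) (fun z => ∏ v, g v (z v))
      ≤ 1 - ∏ v, (1 - tvDist (f v) (g v)) := by
  have hsum : ∀ h : ι → α → ℝ, (∀ v, ∑ a, h v a = 1) → ∑ z : ι → α, ∏ v, h v (z v) = 1 :=
    fun h hh => by simp [← Fintype.prod_sum, hh]
  rw [tvDist_eq_one_sub_sum_min (hsum f hf1) (hsum g hg1), sub_le_sub_iff_left]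
  simp only [tvDist_eq_one_sub_sum_min (hf1 _) (hg1 _), sub_sub_cancel, Fintype.prod_sum]
  gcongr with z
  have hmin0 : ∀ v ∈ univ, 0 ≤ min (f v (z v)) (g v (z v)) := fun v _ =>
    le_min (hf0 v _) (hg0 v _)
  exact le_min (prod_le_prod hmin0 fun v _ => min_le_left _ _)
    (prod_le_prod hmin0 fun v _ => min_le_right _ _)

end TotalVariation

lemma alphaOn_eq_one_sub_prod {ι : Type*} (s : Finset ι) (f : ι → ℝ) :
    alphaOn s f = 1 - ∏ v ∈ s, (1 - f v) := by
  classical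
  induction s using Finset.induction_on with
  | empty => simp [alphaOn]
  | insert a s ha ih =>
    rw [alphaOn, fold_insert ha, prod_insert ha, ← alphaOn, ih, opA]
    ring

section Theta

variable {n : ℕ} {S : Type*} [Fintype S] [Nonempty S] (p : Fin n → S → S → ℝ)

lemma tvDist_le_thetaCoef (v : Fin n) (b b' : S) :
    tvDist (fun a => p v a b) (fun a => p v a b') ≤ thetaCoef p v :=
  le_sup' (fun bb' : S × S => (1 / 2) * ∑ a, |p v a bb'.1 - p v a bb'.2|) (mem_univ (b, b'))

lemma thetaCoef_nonneg (v : Fin n) : 0 ≤ thetaCoef p v :=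
  (tvDist_nonneg _ _).trans
    (tvDist_le_thetaCoef p v (Classical.arbitrary S) (Classical.arbitrary S))

variable {p}

lemma thetaCoef_le_one {v : Fin n} (hp0 : ∀ b a, 0 ≤ p v a b) (hp1 : ∀ b, ∑ a, p v a b = 1) :
    thetaCoef p v ≤ 1 :=
  sup'_le _ _ fun bb' _ => tvDist_le_one (hp0 bb'.1) (hp0 bb'.2) (hp1 bb'.1) (hp1 bb'.2)

end Theta

noncomputable def pinnedSum {ι S : Type*} [Fintype ι] [DecidableEq ι] [Fintype S] [DecidableEq S]
    (E : Finset ι) (g : ι → S) (F : (ι → S) → ℝ) : ℝ :=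
  ∑ x ∈ univ.filter (fun x => ∀ v ∉ E, x v = g v), F x

section PinnedSum

variable {ι S : Type*} [Fintype ι] [DecidableEq ι] [Fintype S] [DecidableEq S]

lemma pinnedSum_congr {E : Finset ι} {g : ι → S} {F G : (ι → S) → ℝ}
    (h : ∀ x, (∀ v ∉ E, x v = g v) → F x = G x) : pinnedSum E g F = pinnedSum E g G :=
  sum_congr rfl fun x hx => h x (mem_filter.mp hx).2

lemma mul_pinnedSum (c : ℝ) (E : Finset ι) (g : ι → S) (F : (ι → S) → ℝ) :
    c * pinnedSum E g F = pinnedSum E g fun x => c * F x :=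
  mul_sum _ _ _

lemma pinnedSum_empty (g : ι → S) (F : (ι → S) → ℝ) : pinnedSum ∅ g F = F g := by
  have : univ.filter (fun x : ι → S => ∀ v ∉ (∅ : Finset ι), x v = g v) = {g} := by
    ext x
    simp [funext_iff]
  rw [pinnedSum, this, sum_singleton]

lemma pinnedSum_singleton (m : ι) (g : ι → S) (F : (ι → S) → ℝ) :
    pinnedSum {m} g F = ∑ a, F (Function.update g m a) := by
  have hupdate : ∀ x ∈ univ.filter (fun x => ∀ v ∉ ({m} : Finset ι), x v = g v),
      Function.update g m (x m) = x := by
    intro x hx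
    funext v
    by_cases hv : v = m
    · simp [hv]
    · simp [hv, (mem_filter.mp hx).2 v (by simpa using hv)]
  refine sum_nbij' (fun x => x m) (Function.update g m) (fun _ _ => mem_univ _) ?_ hupdate
    (fun a _ => by simp) fun x hx => by rw [hupdate x hx]
  intro a _
  simp +contextual

lemma pinnedSum_union {A B : Finset ι} (hAB : Disjoint A B) (g : ι → S) (F : (ι → S) → ℝ) :
    pinnedSum (A ∪ B) g F = pinnedSum A g fun z => pinnedSum B z F := by
  unfold pinnedSum
  rw [sum_comm' (t' := univ.filter fun x => ∀ v ∉ A ∪ B, x v = g v)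
    (s' := fun w => {A.piecewise w g})]
  · simp
  intro z w
  simp only [mem_filter, mem_univ, true_and, mem_singleton, mem_union, not_or]
  constructor
  · rintro ⟨hz, hw⟩
    refine ⟨funext fun v => ?_, fun v hv => (hw v hv.2).trans (hz v hv.1)⟩
    by_cases hv : v ∈ A
    · rw [piecewise_eq_of_mem _ _ _ hv, hw v (disjoint_left.mp hAB hv)]
    · rw [piecewise_eq_of_notMem _ _ _ hv, hz v hv]
  · rintro ⟨rfl, hw⟩
    refine ⟨fun v hv => piecewise_eq_of_notMem _ _ _ hv, fun v hv => ?_⟩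
    by_cases hvA : v ∈ A
    · rw [piecewise_eq_of_mem _ _ _ hvA]
    · rw [piecewise_eq_of_notMem _ _ _ hvA, hw v ⟨hvA, hv⟩]

lemma pinnedSum_congr_pins {E : Finset ι} {g g' : ι → S} {F : (ι → S) → ℝ} (R : Set ι)
    (hF : ∀ x x', (∀ v ∈ R, x v = x' v) → F x = F x') (hg : ∀ v ∈ R, v ∉ E → g v = g' v) :
    pinnedSum E g F = pinnedSum E g' F := by
  have hmem : ∀ {h h' : ι → S} x, (∀ v ∉ E, x v = h v) →
      E.piecewise x h' ∈ univ.filter (fun x => ∀ v ∉ E, x v = h' v) := fun x _ => by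
    simp +contextual
  have hinv : ∀ {h h' : ι → S} x, (∀ v ∉ E, x v = h v) → E.piecewise (E.piecewise x h') h = x :=
    fun x hx => funext fun v => by by_cases hv : v ∈ E <;> simp [hv, hx]
  refine sum_nbij' (fun x => E.piecewise x g') (fun x => E.piecewise x g)
    (fun x hx => hmem x (mem_filter.mp hx).2) (fun x hx => hmem x (mem_filter.mp hx).2)
    (fun x hx => hinv x (mem_filter.mp hx).2) (fun x hx => hinv x (mem_filter.mp hx).2)
    fun x hx => hF _ _ fun v hv => ?_
  by_cases hvE : v ∈ E
  · simp [hvE]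
  · simp [hvE, (mem_filter.mp hx).2 v hvE, hg v hv hvE]

lemma pinnedSum_prod_kernel_eq_one [LinearOrder ι] (par : ι → ι) (k : ι → S → S → ℝ)
    (E : Finset ι) (hpar : ∀ v ∈ E, par v < v) (hk : ∀ v ∈ E, ∀ b, ∑ a, k v a b = 1)
    (g : ι → S) : pinnedSum E g (fun x => ∏ v ∈ E, k v (x v) (x (par v))) = 1 := by
  induction E using Finset.induction_on_max generalizing g with
  | empty => simp [pinnedSum_empty]
  | insert m E hlt ih =>
    have hmE : m ∉ E := fun h => lt_irrefl m (hlt m h)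
    have hupdate : ∀ (z : ι → S) a, ∏ v ∈ insert m E, k v (Function.update z m a v)
        (Function.update z m a (par v)) = k m a (z (par m)) * ∏ v ∈ E, k v (z v) (z (par v)) := by
      intro z a
      rw [prod_insert hmE, Function.update_self,
        Function.update_of_ne (hpar m (mem_insert_self m E)).ne]
      congr 1
      refine prod_congr rfl fun v hv => ?_
      rw [Function.update_of_ne (hlt v hv).ne,
        Function.update_of_ne ((hpar v (mem_insert_of_mem hv)).trans (hlt v hv)).ne]
    calc pinnedSum (insert m E) g (fun x => ∏ v ∈ insert m E, k v (x v) (x (par v)))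
        = pinnedSum E g fun z => ∑ a, ∏ v ∈ insert m E,
            k v (Function.update z m a v) (Function.update z m a (par v)) := by
          rw [← union_singleton, pinnedSum_union (disjoint_singleton_right.mpr hmE)]
          simp only [pinnedSum_singleton, union_singleton]
      _ = pinnedSum E g fun z => ∏ v ∈ E, k v (z v) (z (par v)) := by
          simp only [hupdate, ← sum_mul, hk m (mem_insert_self m E), one_mul]
      _ = 1 := ih (fun v hv => hpar v (mem_insert_of_mem hv))
          (fun v hv => hk v (mem_insert_of_mem hv)) g

lemma sum_prod_ite_mul_eq_pinnedSum (A : Finset ι) (q : ι → S → ℝ) (c : ι → S)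
    (F : (ι → S) → ℝ) :
    ∑ z : ι → S, (∏ v, if v ∈ A then q v (z v) else if z v = c v then 1 else 0) * F z
      = pinnedSum A c fun z => (∏ v ∈ A, q v (z v)) * F z := by
  rw [pinnedSum, sum_filter]
  refine sum_congr rfl fun z _ => ?_
  rw [prod_ite, prod_boole, filter_mem_eq_inter, univ_inter]
  simp only [mem_filter, mem_univ, true_and]
  split_ifs <;> ring

end PinnedSum

section Tree

variable {n : ℕ} {par : Fin n → Fin n} {dep : Fin n → ℕ}

variable (par dep) in
def IsTreeDepth : Prop :=
  ∀ v : Fin n, (v : ℕ) ≠ 0 → par v < v ∧ dep v = dep (par v) + 1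

variable (dep) in
def IsBFSOrder : Prop :=
  ∀ u v : Fin n, dep u < dep v → u < v

lemma dep_le_of_desc (hpar : IsTreeDepth par dep) {i v : Fin n} (h : desc par i v) :
    dep i ≤ dep v := by
  induction h with
  | refl => rfl
  | tail _ hbc ih => rw [(hpar _ hbc.1).2, hbc.2]; omega

lemma eq_of_desc_of_dep_le (hpar : IsTreeDepth par dep) {i v : Fin n} (h : desc par i v)
    (hd : dep v ≤ dep i) : v = i := by
  rcases Relation.ReflTransGen.cases_tail h with rfl | ⟨b, hb, hbv⟩
  · rfl
  · have := dep_le_of_desc hpar hb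
    rw [(hpar v hbv.1).2, hbv.2] at hd
    omega

lemma desc_par_of_ne {i v : Fin n} (h : desc par i v) (hv : v ≠ i) :
    desc par i (par v) ∧ (v : ℕ) ≠ 0 := by
  rcases Relation.ReflTransGen.cases_tail h with rfl | ⟨b, hb, hbv⟩
  · exact absurd rfl hv
  · exact ⟨hbv.2 ▸ hb, hbv.1⟩

lemma val_ne_zero_of_lt {i v : Fin n} (h : i < v) : (v : ℕ) ≠ 0 :=
  Nat.ne_zero_of_lt (Fin.lt_def.mp h)

lemma dep_min'_le_of_mem_Tij (hbfs : IsBFSOrder dep) {i j : Fin n} (hne : (Tij par i j).Nonempty)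
    {v : Fin n} (hv : v ∈ Tij par i j) : dep ((Tij par i j).min' hne) ≤ dep v :=
  le_of_not_gt fun hlt => (hbfs v _ hlt).not_ge ((Tij par i j).min'_le v hv)

end Tree

section Levels

variable {n : ℕ} (par : Fin n → Fin n) (dep : Fin n → ℕ) (i : Fin n)

open Classical in
noncomputable def descLevel (d : ℕ) : Finset (Fin n) :=
  univ.filter fun v => desc par i v ∧ dep v = d

open Classical in
noncomputable def pending (d : ℕ) : Finset (Fin n) :=
  univ.filter fun v => i < v ∧ ¬(desc par i v ∧ dep v ≤ d)

variable {par dep i}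

lemma mem_descLevel {d : ℕ} {v : Fin n} :
    v ∈ descLevel par dep i d ↔ desc par i v ∧ dep v = d := by
  simp [descLevel]

lemma mem_pending {d : ℕ} {v : Fin n} :
    v ∈ pending par dep i d ↔ i < v ∧ ¬(desc par i v ∧ dep v ≤ d) := by
  simp [pending]

lemma val_ne_zero_of_mem_pending {d : ℕ} {v : Fin n} (hv : v ∈ pending par dep i d) :
    (v : ℕ) ≠ 0 :=
  val_ne_zero_of_lt (mem_pending.mp hv).1

lemma self_mem_descLevel : i ∈ descLevel par dep i (dep i) :=
  mem_descLevel.mpr ⟨Relation.ReflTransGen.refl, rfl⟩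

lemma notMem_pending_of_mem_descLevel {d : ℕ} {v : Fin n} (hv : v ∈ descLevel par dep i d) :
    v ∉ pending par dep i d := fun h =>
  (mem_pending.mp h).2 ⟨(mem_descLevel.mp hv).1, (mem_descLevel.mp hv).2.le⟩

lemma pending_dep (hpar : IsTreeDepth par dep) :
    pending par dep i (dep i) = univ.filter (i < ·) := by
  ext v
  simp only [mem_pending, mem_filter, mem_univ, true_and, and_iff_left_iff_imp]
  exact fun hiv hv => hiv.ne' (eq_of_desc_of_dep_le hpar hv.1 hv.2)

lemma descLevel_succ_union_pending (hbfs : IsBFSOrder dep) {d : ℕ} (hd : dep i ≤ d) :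
    descLevel par dep i (d + 1) ∪ pending par dep i (d + 1) = pending par dep i d := by
  ext v
  simp only [mem_union, mem_descLevel, mem_pending]
  constructor
  · rintro (⟨hv, hdep⟩ | ⟨hiv, hv⟩)
    · exact ⟨hbfs i v (by omega), fun h => by omega⟩
    · exact ⟨hiv, fun h => hv ⟨h.1, by omega⟩⟩
  · rintro ⟨hiv, hv⟩
    by_cases h : desc par i v ∧ dep v = d + 1
    · exact Or.inl h
    · exact Or.inr ⟨hiv, fun h' => by grind⟩

lemma disjoint_descLevel_succ_pending (d : ℕ) :
    Disjoint (descLevel par dep i (d + 1)) (pending par dep i (d + 1)) :=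
  disjoint_left.mpr fun _ => notMem_pending_of_mem_descLevel

lemma par_mem_descLevel (hpar : IsTreeDepth par dep) {d : ℕ} (hd : dep i ≤ d) {v : Fin n}
    (hv : v ∈ descLevel par dep i (d + 1)) : par v ∈ descLevel par dep i d := by
  obtain ⟨hdesc, hdep⟩ := mem_descLevel.mp hv
  obtain ⟨hpdesc, hv0⟩ := desc_par_of_ne hdesc fun h => by subst h; omega
  exact mem_descLevel.mpr ⟨hpdesc, by have := (hpar v hv0).2; omega⟩

lemma par_notMem_descLevel (hpar : IsTreeDepth par dep) {d : ℕ} {v : Fin n}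
    (hv : v ∈ pending par dep i (d + 1)) : par v ∉ descLevel par dep i d := by
  intro hpv
  obtain ⟨hpdesc, hpdep⟩ := mem_descLevel.mp hpv
  have hv0 := val_ne_zero_of_mem_pending hv
  exact (mem_pending.mp hv).2
    ⟨Relation.ReflTransGen.tail hpdesc ⟨hv0, rfl⟩, by have := (hpar v hv0).2; omega⟩

end Levels

section LevelKernel

variable {n : ℕ} {S : Type*} [DecidableEq S]
  (par : Fin n → Fin n) (dep : Fin n → ℕ) (p : Fin n → S → S → ℝ) (i : Fin n) (s0 : S)

/-- Puts the dummy state `s0` outside level `d`, so that the chain only remembers its current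
level. -/
noncomputable def levelFactor (d : ℕ) (x : Fin n → S) (v : Fin n) (a : S) : ℝ :=
  if v ∈ descLevel par dep i d then p v a (x (par v)) else if a = s0 then 1 else 0

noncomputable def levelKernel (d : ℕ) (x z : Fin n → S) : ℝ :=
  ∏ v, levelFactor par dep p i s0 d x v (z v)

variable {par dep p i s0}

lemma levelFactor_nonneg (hbfs : IsBFSOrder dep)
    (hp0 : ∀ v : Fin n, (v : ℕ) ≠ 0 → ∀ b a, 0 ≤ p v a b) {d : ℕ} (hd : dep i < d)
    (x : Fin n → S) (v : Fin n) (a : S) : 0 ≤ levelFactor par dep p i s0 d x v a := by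
  unfold levelFactor
  split_ifs with hv
  · exact hp0 v (val_ne_zero_of_lt (hbfs i v ((mem_descLevel.mp hv).2 ▸ hd))) _ _
  all_goals norm_num

variable [Fintype S]

lemma levelFactor_sum_eq_one (hbfs : IsBFSOrder dep)
    (hp1 : ∀ v : Fin n, (v : ℕ) ≠ 0 → ∀ b, ∑ a, p v a b = 1) {d : ℕ} (hd : dep i < d)
    (x : Fin n → S) (v : Fin n) : ∑ a, levelFactor par dep p i s0 d x v a = 1 := by
  unfold levelFactor
  split_ifs with hv
  · exact hp1 v (val_ne_zero_of_lt (hbfs i v ((mem_descLevel.mp hv).2 ▸ hd))) _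
  · exact Fintype.sum_ite_eq' s0 fun _ => (1 : ℝ)

lemma levelKernel_sum_eq_one (hbfs : IsBFSOrder dep)
    (hp1 : ∀ v : Fin n, (v : ℕ) ≠ 0 → ∀ b, ∑ a, p v a b = 1) {d : ℕ} (hd : dep i < d)
    (x : Fin n → S) : ∑ z, levelKernel par dep p i s0 d x z = 1 := by
  simp only [levelKernel, ← Fintype.prod_sum, levelFactor_sum_eq_one hbfs hp1 hd, prod_const_one]

lemma one_sub_thetaCoef_le [Nonempty S] {d : ℕ} (x x' : Fin n → S) (v : Fin n) :
    (if dep v = d then 1 - thetaCoef p v else 1)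
      ≤ 1 - tvDist (levelFactor par dep p i s0 d x v) (levelFactor par dep p i s0 d x' v) := by
  by_cases hv : v ∈ descLevel par dep i d
  · have hx : ∀ x : Fin n → S, levelFactor par dep p i s0 d x v = fun a => p v a (x (par v)) :=
      fun x => funext fun a => if_pos hv
    rw [if_pos (mem_descLevel.mp hv).2, hx, hx]
    linarith [tvDist_le_thetaCoef p v (x (par v)) (x' (par v))]
  · have hx : levelFactor par dep p i s0 d x v = levelFactor par dep p i s0 d x' v :=
      funext fun a => by simp only [levelFactor, if_neg hv]
    rw [hx, tvDist_self, sub_zero]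
    split_ifs
    · linarith [thetaCoef_nonneg p v]
    · rfl

lemma tvDist_levelKernel_le [Nonempty S] (hbfs : IsBFSOrder dep)
    (hp0 : ∀ v : Fin n, (v : ℕ) ≠ 0 → ∀ b a, 0 ≤ p v a b)
    (hp1 : ∀ v : Fin n, (v : ℕ) ≠ 0 → ∀ b, ∑ a, p v a b = 1) {d : ℕ} (hd : dep i < d)
    (x x' : Fin n → S) :
    tvDist (levelKernel par dep p i s0 d x) (levelKernel par dep p i s0 d x')
      ≤ alphaOn (univ.filter fun v : Fin n => dep v = d) (thetaCoef p) := by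
  have hfac0 : ∀ v ∈ univ, 0 ≤ if dep v = d then 1 - thetaCoef p v else 1 := by
    intro v _
    split_ifs with hv
    · have hv0 := val_ne_zero_of_lt (hbfs i v (hv ▸ hd))
      linarith [thetaCoef_le_one (hp0 v hv0) (hp1 v hv0)]
    · exact zero_le_one
  calc tvDist (levelKernel par dep p i s0 d x) (levelKernel par dep p i s0 d x')
      ≤ 1 - ∏ v, (1 - tvDist (levelFactor par dep p i s0 d x v)
          (levelFactor par dep p i s0 d x' v)) :=
        tvDist_pi_le (levelFactor_nonneg hbfs hp0 hd x) (levelFactor_nonneg hbfs hp0 hd x')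
          (levelFactor_sum_eq_one hbfs hp1 hd x) (levelFactor_sum_eq_one hbfs hp1 hd x')
    _ ≤ 1 - ∏ v ∈ univ.filter fun v : Fin n => dep v = d, (1 - thetaCoef p v) := by
        rw [prod_filter]
        exact sub_le_sub_left (prod_le_prod hfac0 fun v _ => one_sub_thetaCoef_le x x' v) 1
    _ = _ := (alphaOn_eq_one_sub_prod _ _).symm

end LevelKernel

section SliceLaw

variable {n : ℕ} {S : Type*} [Fintype S] [DecidableEq S]
  (par : Fin n → Fin n) (dep : Fin n → ℕ) (p : Fin n → S → S → ℝ) (i : Fin n) (s0 : S)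

/-- The law of the descendants of `i` at depth `dep i + t` given `X = y` on the vertices up to
`i`, the other coordinates being set to `s0`. -/
noncomputable def sliceLaw (y : Fin n → S) : ℕ → (Fin n → S) → ℝ
  | 0 => fun z => if z = y then 1 else 0
  | t + 1 => fun z => ∑ x, sliceLaw y t x * levelKernel par dep p i s0 (dep i + t + 1) x z

variable {par dep p i s0}

lemma sliceLaw_sum_eq_one (hbfs : IsBFSOrder dep)
    (hp1 : ∀ v : Fin n, (v : ℕ) ≠ 0 → ∀ b, ∑ a, p v a b = 1) (y : Fin n → S) (t : ℕ) :
    ∑ z, sliceLaw par dep p i s0 y t z = 1 := by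
  induction t with
  | zero => exact Fintype.sum_ite_eq' y fun _ => (1 : ℝ)
  | succ t ih =>
    simp only [sliceLaw]
    rw [sum_comm]
    simp only [← mul_sum, levelKernel_sum_eq_one hbfs hp1 (by omega : dep i < dep i + t + 1),
      mul_one, ih]

lemma tvDist_sliceLaw_le [Nonempty S] (hbfs : IsBFSOrder dep)
    (hp0 : ∀ v : Fin n, (v : ℕ) ≠ 0 → ∀ b a, 0 ≤ p v a b)
    (hp1 : ∀ v : Fin n, (v : ℕ) ≠ 0 → ∀ b, ∑ a, p v a b = 1) (y y' : Fin n → S) (t : ℕ) :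
    tvDist (sliceLaw par dep p i s0 y t) (sliceLaw par dep p i s0 y' t)
      ≤ ∏ d ∈ Icc (dep i + 1) (dep i + t),
          alphaOn (univ.filter fun v : Fin n => dep v = d) (thetaCoef p) := by
  induction t with
  | zero =>
    rw [Icc_eq_empty (by omega), prod_empty]
    have hδ : ∀ (y : Fin n → S) z, 0 ≤ sliceLaw par dep p i s0 y 0 z := fun y z => by
      simp only [sliceLaw]
      split_ifs <;> norm_num
    exact tvDist_le_one (hδ y) (hδ y') (sliceLaw_sum_eq_one hbfs hp1 y 0)
      (sliceLaw_sum_eq_one hbfs hp1 y' 0)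
  | succ t ih =>
    have hd : dep i < dep i + t + 1 := by omega
    have hα := (tvDist_nonneg _ _).trans
      (tvDist_levelKernel_le (par := par) (s0 := s0) hbfs hp0 hp1 hd y y)
    calc tvDist (sliceLaw par dep p i s0 y (t + 1)) (sliceLaw par dep p i s0 y' (t + 1))
        ≤ alphaOn (univ.filter fun v : Fin n => dep v = dep i + t + 1) (thetaCoef p)
          * tvDist (sliceLaw par dep p i s0 y t) (sliceLaw par dep p i s0 y' t) := by
          simp only [sliceLaw]
          exact tvDist_comp_le _ _ _
            (by rw [sliceLaw_sum_eq_one hbfs hp1, sliceLaw_sum_eq_one hbfs hp1])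
            (tvDist_levelKernel_le hbfs hp0 hp1 hd)
      _ ≤ _ := mul_le_mul_of_nonneg_left ih hα
      _ = _ := by rw [← add_assoc, prod_Icc_succ_top (by omega), mul_comm]

end SliceLaw

section OutputWeight

variable {n : ℕ} {S : Type*} [DecidableEq S]
  (par : Fin n → Fin n) (dep : Fin n → ℕ) (p : Fin n → S → S → ℝ) (i j : Fin n)

noncomputable def outputWeight (d : ℕ) (s : {v : Fin n // j ≤ v} → S) (w : Fin n → S) : ℝ :=
  (if ∀ v : {v : Fin n // j ≤ v}, w v = s v then 1 else 0) *
    ∏ v ∈ pending par dep i d, p v (w v) (w (par v))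

variable {par dep p i j}

lemma outputWeight_succ_congr (hpar : IsTreeDepth par dep) {d : ℕ}
    (hout : ∀ v, desc par i v → j ≤ v → dep v ≠ d) (s : {v : Fin n // j ≤ v} → S)
    {w w' : Fin n → S} (h : ∀ v ∉ descLevel par dep i d, w v = w' v) :
    outputWeight par dep p i j (d + 1) s w = outputWeight par dep p i j (d + 1) s w' := by
  have hblock : (∀ v : {v : Fin n // j ≤ v}, w v = s v) ↔ ∀ v : {v : Fin n // j ≤ v}, w' v = s v :=
    forall_congr' fun v => by
      rw [h v fun hv => hout v (mem_descLevel.mp hv).1 v.2 (mem_descLevel.mp hv).2]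
  have hprod : ∏ v ∈ pending par dep i (d + 1), p v (w v) (w (par v))
      = ∏ v ∈ pending par dep i (d + 1), p v (w' v) (w' (par v)) := by
    refine prod_congr rfl fun v hv => ?_
    have hvD : v ∉ descLevel par dep i d := fun hvD =>
      (mem_pending.mp hv).2 ⟨(mem_descLevel.mp hvD).1, (mem_descLevel.mp hvD).2 ▸ d.le_succ⟩
    rw [h v hvD, h (par v) (par_notMem_descLevel hpar hv)]
  simp only [outputWeight, hprod, if_congr hblock rfl rfl]

lemma outputWeight_eq_prod_mul_outputWeight_succ (hpar : IsTreeDepth par dep)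
    (hbfs : IsBFSOrder dep) {d : ℕ} (hd : dep i ≤ d) (s : {v : Fin n // j ≤ v} → S)
    {w x : Fin n → S} (hw : ∀ v ∈ descLevel par dep i d, w v = x v) :
    outputWeight par dep p i j d s w
      = (∏ v ∈ descLevel par dep i (d + 1), p v (w v) (x (par v)))
        * outputWeight par dep p i j (d + 1) s w := by
  have hx : ∏ v ∈ descLevel par dep i (d + 1), p v (w v) (w (par v))
      = ∏ v ∈ descLevel par dep i (d + 1), p v (w v) (x (par v)) :=
    prod_congr rfl fun v hv => by rw [hw _ (par_mem_descLevel hpar hd hv)]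
  rw [outputWeight, outputWeight, ← descLevel_succ_union_pending hbfs hd,
    prod_union (disjoint_descLevel_succ_pending d), hx]
  ring

end OutputWeight

section OutputLaw

variable {n : ℕ} {S : Type*} [Fintype S] [DecidableEq S]
  (par : Fin n → Fin n) (dep : Fin n → ℕ) (p : Fin n → S → S → ℝ) (i j : Fin n) (s0 : S)

/-- The conditional law of the block `X_{≥ j}` given `X = y` before `i` and `X = z` on the
descendants of `i` at depth `d`. -/
noncomputable def outputLaw (y : Fin n → S) (d : ℕ) (z : Fin n → S)
    (s : {v : Fin n // j ≤ v} → S) : ℝ :=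
  pinnedSum (pending par dep i d)
    ((descLevel par dep i d).piecewise z fun v => if v < i then y v else s0)
    (outputWeight par dep p i j d s)

variable {par dep p i j s0}

lemma outputLaw_nonneg (hp0 : ∀ v : Fin n, (v : ℕ) ≠ 0 → ∀ b a, 0 ≤ p v a b)
    (y : Fin n → S) (d : ℕ) (z : Fin n → S) (s : {v : Fin n // j ≤ v} → S) :
    0 ≤ outputLaw par dep p i j s0 y d z s := by
  refine sum_nonneg fun w _ => mul_nonneg (by split_ifs <;> norm_num) (prod_nonneg fun v hv => ?_)
  exact hp0 v (val_ne_zero_of_mem_pending hv) _ _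

lemma sum_outputWeight (d : ℕ) (w : Fin n → S) :
    ∑ s, outputWeight par dep p i j d s w = ∏ v ∈ pending par dep i d, p v (w v) (w (par v)) := by
  simp only [outputWeight, ← sum_mul, ← funext_iff (f := fun v : {v : Fin n // j ≤ v} => w v),
    Fintype.sum_ite_eq, one_mul]

lemma outputLaw_sum_eq_one (hpar : IsTreeDepth par dep)
    (hp1 : ∀ v : Fin n, (v : ℕ) ≠ 0 → ∀ b, ∑ a, p v a b = 1)
    (y : Fin n → S) (d : ℕ) (z : Fin n → S) :
    ∑ s, outputLaw par dep p i j s0 y d z s = 1 := by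
  simp only [outputLaw, pinnedSum]
  rw [sum_comm]
  simp only [sum_outputWeight]
  exact pinnedSum_prod_kernel_eq_one par p _
    (fun v hv => (hpar v (val_ne_zero_of_mem_pending hv)).1)
    (fun v hv => hp1 v (val_ne_zero_of_mem_pending hv)) _

lemma outputLaw_congr {y y' : Fin n → S} (hyy' : ∀ v, v < i → y v = y' v) :
    outputLaw par dep p i j s0 y = outputLaw par dep p i j s0 y' := by
  have hg : (fun v => if v < i then y v else s0) = fun v => if v < i then y' v else s0 :=
    funext fun v => by split_ifs with h <;> simp [h, hyy']
  funext d z s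
  simp only [outputLaw, hg]

lemma condP_eq_outputLaw (hpar : IsTreeDepth par dep) (y : Fin n → S)
    (s : {v : Fin n // j ≤ v} → S) :
    condP par p i j y s = outputLaw par dep p i j s0 y (dep i) y s := by
  have hpins : ∀ v ∈ Set.univ, v ∉ univ.filter (i < ·) →
      (descLevel par dep i (dep i)).piecewise y (fun v => if v < i then y v else s0) v = y v := by
    intro v _ hv
    by_cases hvD : v ∈ descLevel par dep i (dep i)
    · exact piecewise_eq_of_mem _ _ _ hvD
    · have hvi : v < i :=
        lt_of_le_of_ne (by simpa using hv) fun h => hvD (h ▸ self_mem_descLevel)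
      simp [hvD, hvi]
  unfold outputLaw outputWeight
  rw [pending_dep hpar,
    pinnedSum_congr_pins Set.univ (fun x x' h => congrArg _ (funext fun v => h v trivial)) hpins]
  simp only [condP, pinnedSum, sum_filter, ite_and, boole_mul]
  refine sum_congr rfl fun x _ => ?_
  simp only [mem_filter, mem_univ, true_and, not_lt]
  congr

lemma sum_levelKernel_mul_outputLaw (hpar : IsTreeDepth par dep) (hbfs : IsBFSOrder dep)
    {d : ℕ} (hd : dep i ≤ d) (hout : ∀ v, desc par i v → j ≤ v → dep v ≠ d) (y x : Fin n → S)
    (s : {v : Fin n // j ≤ v} → S) :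
    ∑ z, levelKernel par dep p i s0 (d + 1) x z * outputLaw par dep p i j s0 y (d + 1) z s
      = outputLaw par dep p i j s0 y d x s := by
  set D := descLevel par dep i d
  set D' := descLevel par dep i (d + 1)
  set U' := pending par dep i (d + 1)
  set g : Fin n → S := fun v => if v < i then y v else s0
  set Q : (Fin n → S) → ℝ := fun w => ∏ v ∈ D', p v (w v) (x (par v))
  set W := outputWeight par dep p i j (d + 1) s
  have hdisj : Disjoint D' U' := disjoint_descLevel_succ_pending d
  have hQ : ∀ w w' : Fin n → S, (∀ v ∈ D', w v = w' v) → Q w = Q w' :=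
    fun w w' h => prod_congr rfl fun v hv => by rw [h v hv]
  have hD' : ∀ v ∈ D', v ∉ D := fun v hv hv' => by
    have := (mem_descLevel.mp hv).2
    have := (mem_descLevel.mp hv').2
    omega
  calc ∑ z, levelKernel par dep p i s0 (d + 1) x z * outputLaw par dep p i j s0 y (d + 1) z s
      = pinnedSum D' (fun _ => s0) fun z => Q z * outputLaw par dep p i j s0 y (d + 1) z s :=
        sum_prod_ite_mul_eq_pinnedSum D' (fun v a => p v a (x (par v))) _ _
    _ = pinnedSum D' g fun z => Q z * outputLaw par dep p i j s0 y (d + 1) z s := by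
        refine pinnedSum_congr_pins D' (fun z z' h => ?_) fun v hv hv' => absurd hv hv'
        rw [hQ z z' h, outputLaw, outputLaw, D'.piecewise_congr (fun v hv => h v hv) fun _ _ => rfl]
    _ = pinnedSum D' g fun z => pinnedSum U' z fun w => Q w * W w := by
        refine pinnedSum_congr fun z hz => ?_
        have hpins : D'.piecewise z g = z := funext fun v => by
          by_cases hv : v ∈ D' <;> simp [hv, hz]
        rw [outputLaw, hpins, mul_pinnedSum]
        exact pinnedSum_congr fun w hw => by
          rw [hQ z w fun v hv => (hw v (disjoint_left.mp hdisj hv)).symm]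
    _ = pinnedSum (pending par dep i d) g fun w => Q w * W w := by
        rw [← pinnedSum_union hdisj, descLevel_succ_union_pending hbfs hd]
    -- The pins differ only on level `d`, which `Q * W` does not read.
    _ = pinnedSum (pending par dep i d) (D.piecewise x g) fun w => Q w * W w := by
        refine pinnedSum_congr_pins {v | v ∉ D} (fun w w' h => ?_)
          fun v hv _ => (piecewise_eq_of_notMem _ _ _ hv).symm
        exact congrArg₂ (· * ·) (hQ w w' fun v hv => h v (hD' v hv))
          (outputWeight_succ_congr hpar hout s h)
    _ = outputLaw par dep p i j s0 y d x s := by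
        refine pinnedSum_congr fun w hw => ?_
        rw [outputWeight_eq_prod_mul_outputWeight_succ hpar hbfs hd s fun v hv =>
          (hw v (notMem_pending_of_mem_descLevel hv)).trans (piecewise_eq_of_mem _ _ _ hv)]

lemma condP_eq_sum_sliceLaw_mul_outputLaw (hpar : IsTreeDepth par dep) (hbfs : IsBFSOrder dep)
    (y : Fin n → S) {t : ℕ} (ht : ∀ v, desc par i v → j ≤ v → dep i + t ≤ dep v)
    (s : {v : Fin n // j ≤ v} → S) :
    condP par p i j y s
      = ∑ z, sliceLaw par dep p i s0 y t z * outputLaw par dep p i j s0 y (dep i + t) z s := by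
  induction t with
  | zero =>
    simp only [sliceLaw, ite_mul, one_mul, zero_mul, Fintype.sum_ite_eq', add_zero]
    exact condP_eq_outputLaw hpar y s
  | succ t ih =>
    rw [ih fun v hv hjv => by have := ht v hv hjv; omega]
    simp only [sliceLaw, sum_mul]
    rw [sum_comm]
    refine sum_congr rfl fun x _ => ?_
    rw [← sum_levelKernel_mul_outputLaw hpar hbfs (by omega : dep i ≤ dep i + t)
      (fun v hv hjv => by have := ht v hv hjv; omega), mul_sum]
    exact sum_congr rfl fun z _ => by rw [← add_assoc, mul_assoc]

end OutputLaw

open Classical in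
theorem eta_le_prod_alpha_general {n : ℕ} {S : Type*} [Fintype S] [Nonempty S]
    (par : Fin n → Fin n) (dep : Fin n → ℕ)
    (hpar : ∀ v : Fin n, (v : ℕ) ≠ 0 → par v < v ∧ dep v = dep (par v) + 1)
    (hbfs : ∀ u v : Fin n, dep u < dep v → u < v)
    (p : Fin n → S → S → ℝ)
    (hp0 : ∀ v : Fin n, (v : ℕ) ≠ 0 → ∀ b a, 0 ≤ p v a b)
    (hp1 : ∀ v : Fin n, (v : ℕ) ≠ 0 → ∀ b, ∑ a, p v a b = 1)
    (i j : Fin n)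
    (hne : (Tij par i j).Nonempty)
    (y y' : Fin n → S) (hyy' : ∀ v, v < i → y v = y' v) :
    eta par p i j y y' ≤
      ∏ d ∈ Finset.Icc (dep i + 1) (dep ((Tij par i j).min' hne)),
        alphaOn (Finset.univ.filter fun v : Fin n => dep v = d) (thetaCoef p) := by
  obtain ⟨s0⟩ := ‹Nonempty S›
  have hj0 := (Tij par i j).min'_mem hne
  simp only [Tij, mem_filter, mem_univ, true_and] at hj0
  obtain ⟨T, hT⟩ := Nat.exists_eq_add_of_le (dep_le_of_desc hpar hj0.1)
  have ht : ∀ v, desc par i v → j ≤ v → dep i + T ≤ dep v := fun v hv hjv =>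
    hT ▸ dep_min'_le_of_mem_Tij hbfs hne (by simp [Tij, hv, hjv])
  have hmix : ∀ y₀ : Fin n → S, (∀ v, v < i → y₀ v = y' v) → condP par p i j y₀ = fun s =>
      ∑ z, sliceLaw par dep p i s0 y₀ T z * outputLaw par dep p i j s0 y' (dep i + T) z s :=
    fun y₀ hy₀ => funext fun s => by
      rw [condP_eq_sum_sliceLaw_mul_outputLaw hpar hbfs y₀ ht, outputLaw_congr hy₀]
  calc eta par p i j y y' = tvDist (condP par p i j y) (condP par p i j y') := rfl
    _ ≤ tvDist (sliceLaw par dep p i s0 y T) (sliceLaw par dep p i s0 y' T) := by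
        rw [hmix y hyy', hmix y' fun _ _ => rfl]
        exact tvDist_comp_le_tvDist _ _
          (by rw [sliceLaw_sum_eq_one hbfs hp1, sliceLaw_sum_eq_one hbfs hp1])
          (outputLaw_nonneg hp0 _ _) (outputLaw_sum_eq_one hpar hp1 _ _)
    _ ≤ _ := hT ▸ tvDist_sliceLaw_le hbfs hp0 hp1 y y' T

open Classical in
/-- `η̄_{ij} ≤ ∏_{d = dep(i)+1}^{dep(j₀)} α({θ_{uv} : v ∈ lev_T(d)})`. -/
theorem eta_le_prod_alpha {n : ℕ} {S : Type*} [Fintype S] [Nonempty S]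
    (par : Fin n → Fin n) (dep : Fin n → ℕ)
    (hroot : ∀ v : Fin n, (v : ℕ) = 0 → dep v = 0)
    (hpar : ∀ v : Fin n, (v : ℕ) ≠ 0 → par v < v ∧ dep v = dep (par v) + 1)
    (hbfs : ∀ u v : Fin n, dep u < dep v → u < v)
    (p0 : S → ℝ) (hp00 : ∀ s, 0 ≤ p0 s) (hp01 : ∑ s, p0 s = 1)
    (p : Fin n → S → S → ℝ)
    (hp0 : ∀ v : Fin n, (v : ℕ) ≠ 0 → ∀ b a, 0 ≤ p v a b)
    (hp1 : ∀ v : Fin n, (v : ℕ) ≠ 0 → ∀ b, ∑ a, p v a b = 1)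
    (i j : Fin n) (hij : i < j)
    (hne : (Tij par i j).Nonempty)
    (y y' : Fin n → S) (hyy' : ∀ v, v < i → y v = y' v) :
    eta par p i j y y' ≤
      ∏ d ∈ Finset.Icc (dep i + 1) (dep ((Tij par i j).min' hne)),
        alphaOn (Finset.univ.filter fun v : Fin n => dep v = d) (thetaCoef p) :=
  eta_le_prod_alpha_general par dep hpar hbfs p hp0 hp1 i j hne y y' hyy'
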